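/- Let G be a finite group, ω a 3-cocycle on G. For all g,k,l,h₀,h₁ ∈ G, the following identity of U(1) phases holds: [ω(l, l⁻¹k⁻¹h₁, h₁⁻¹h₀)·ω(l, l⁻¹k⁻¹gkl, l⁻¹k⁻¹g⁻¹h₁) / (ω(l, l⁻¹k⁻¹g⁻¹h₁, h₁⁻¹gh₀)·ω(k⁻¹gk, l, l⁻¹k⁻¹g⁻¹h₁))] · [ω(k, k⁻¹h₁, h₁⁻¹h₀)·ω(k, k⁻¹gk, k⁻¹g⁻¹h₁) / (ω(k, k⁻¹g⁻¹h₁, h₁⁻¹gh₀)·ω(g, k, k⁻¹g⁻¹h₁))] · [ω(kl, l⁻¹k⁻¹h₁, h₁⁻¹h₀)·ω(kl, l⁻¹k⁻¹gkl, l⁻¹k⁻¹g⁻¹h₁) / (ω(kl, l⁻¹k⁻¹g⁻¹h₁, h₁⁻¹gh₀)·ω(g, kl, l⁻¹k⁻¹g⁻¹h₁))]⁻¹ = ω(k, k⁻¹gk, l) / (ω(g,k,l)·ω(k,l,l⁻¹k⁻¹gkl)). -/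

import Mathlib

/-!
The crossing phase of `g` under `k` behaves like a twisted 1-cocycle in `k`: the phase for
`k * l` is the phase for `k`, times the phase for `l` at the data conjugated by `k`, times the
slant product `τ(ω)_g(k,l)`. Written additively this is a sum of five instances of the cocycle
relation: four of them remove the `ω` values with `k * l` as an argument, and the instance at
`(k, k⁻¹ g k, l, ·)` accounts for the slant product.
-/

section

variable {G A : Type*} [Group G] [CommGroup A]

def IsThreeCocycle (ω : G → G → G → A) : Prop :=
  ∀ g₁ g₂ g₃ g₄ : G,
    ω g₂ g₃ g₄ * ω g₁ (g₂ * g₃) g₄ * ω g₁ g₂ g₃ = ω (g₁ * g₂) g₃ g₄ * ω g₁ g₂ (g₃ * g₄)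

def slantProduct (ω : G → G → G → A) (g k l : G) : A :=
  ω g k l * ω k l (l⁻¹ * k⁻¹ * g * k * l) / ω k (k⁻¹ * g * k) l

def crossingPhase (ω : G → G → G → A) (g k h₀ h₁ : G) : A :=
  ω k (k⁻¹ * h₁) (h₁⁻¹ * h₀) * ω k (k⁻¹ * g * k) (k⁻¹ * g⁻¹ * h₁) /
    (ω k (k⁻¹ * g⁻¹ * h₁) (h₁⁻¹ * g * h₀) * ω g k (k⁻¹ * g⁻¹ * h₁))

open Additive in
theorem crossingPhase_mul {ω : G → G → G → A} (hω : IsThreeCocycle ω) (g k l h₀ h₁ : G) :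
    crossingPhase ω g (k * l) h₀ h₁ =
      crossingPhase ω (k⁻¹ * g * k) l (k⁻¹ * h₀) (k⁻¹ * h₁) * crossingPhase ω g k h₀ h₁ *
        slantProduct ω g k l := by
  have cocycle (a b c d : G) := congrArg ofMul (hω a b c d)
  have h1 := cocycle k l (l⁻¹ * k⁻¹ * g * k * l) (l⁻¹ * k⁻¹ * g⁻¹ * h₁)
  have h2 := cocycle k (k⁻¹ * g * k) l (l⁻¹ * k⁻¹ * g⁻¹ * h₁)
  have h3 := cocycle g k l (l⁻¹ * k⁻¹ * g⁻¹ * h₁)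
  have h4 := cocycle k l (l⁻¹ * k⁻¹ * g⁻¹ * h₁) (h₁⁻¹ * g * h₀)
  have h5 := cocycle k l (l⁻¹ * k⁻¹ * h₁) (h₁⁻¹ * h₀)
  apply ofMul.injective
  simp only [crossingPhase, slantProduct, ofMul_mul, ofMul_div, mul_inv_rev, inv_inv, mul_assoc,
    inv_mul_cancel_left, mul_inv_cancel_left] at h1 h2 h3 h4 h5 ⊢
  linear_combination (norm := module) h2 + h4 - h1 - h3 - h5

end

theorem crossing_phase_identity_general {G : Type*} [Group G]
    (ω : G → G → G → Circle)
    (hω : ∀ g₁ g₂ g₃ g₄ : G,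
      ω g₂ g₃ g₄ * ω g₁ (g₂ * g₃) g₄ * ω g₁ g₂ g₃ =
        ω (g₁ * g₂) g₃ g₄ * ω g₁ g₂ (g₃ * g₄)) :
    ∀ g k l h₀ h₁ : G,
      (ω l (l⁻¹ * k⁻¹ * h₁) (h₁⁻¹ * h₀) * ω l (l⁻¹ * k⁻¹ * g * k * l) (l⁻¹ * k⁻¹ * g⁻¹ * h₁) /
          (ω l (l⁻¹ * k⁻¹ * g⁻¹ * h₁) (h₁⁻¹ * g * h₀) *
            ω (k⁻¹ * g * k) l (l⁻¹ * k⁻¹ * g⁻¹ * h₁))) *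
        (ω k (k⁻¹ * h₁) (h₁⁻¹ * h₀) * ω k (k⁻¹ * g * k) (k⁻¹ * g⁻¹ * h₁) /
          (ω k (k⁻¹ * g⁻¹ * h₁) (h₁⁻¹ * g * h₀) * ω g k (k⁻¹ * g⁻¹ * h₁))) *
        (ω (k * l) (l⁻¹ * k⁻¹ * h₁) (h₁⁻¹ * h₀) *
            ω (k * l) (l⁻¹ * k⁻¹ * g * k * l) (l⁻¹ * k⁻¹ * g⁻¹ * h₁) /
          (ω (k * l) (l⁻¹ * k⁻¹ * g⁻¹ * h₁) (h₁⁻¹ * g * h₀) *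
            ω g (k * l) (l⁻¹ * k⁻¹ * g⁻¹ * h₁)))⁻¹ =
      ω k (k⁻¹ * g * k) l / (ω g k l * ω k l (l⁻¹ * k⁻¹ * g * k * l)) := by
  intro g k l h₀ h₁
  have key : crossingPhase ω (k⁻¹ * g * k) l (k⁻¹ * h₀) (k⁻¹ * h₁) * crossingPhase ω g k h₀ h₁ /
      crossingPhase ω g (k * l) h₀ h₁ = (slantProduct ω g k l)⁻¹ := by
    rw [crossingPhase_mul hω, div_mul_cancel_left]
  simpa only [crossingPhase, slantProduct, div_eq_mul_inv, inv_div, mul_inv_rev, inv_inv, mul_assoc,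
    inv_mul_cancel_left, mul_inv_cancel_left] using key

/-- the phase identity, obtained from five applications of the
3-cocycle relation, showing that the crossing-operator phases of the model
symmetry equal the inverse slant product `τ(ω)_g(k,l)⁻¹`. -/
theorem crossing_phase_identity {G : Type*} [Group G] [Fintype G]
    (ω : G → G → G → Circle)
    (hω : ∀ g₁ g₂ g₃ g₄ : G,
      ω g₂ g₃ g₄ * ω g₁ (g₂ * g₃) g₄ * ω g₁ g₂ g₃ =
        ω (g₁ * g₂) g₃ g₄ * ω g₁ g₂ (g₃ * g₄)) :
    ∀ g k l h₀ h₁ : G,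
      (ω l (l⁻¹ * k⁻¹ * h₁) (h₁⁻¹ * h₀) * ω l (l⁻¹ * k⁻¹ * g * k * l) (l⁻¹ * k⁻¹ * g⁻¹ * h₁) /
          (ω l (l⁻¹ * k⁻¹ * g⁻¹ * h₁) (h₁⁻¹ * g * h₀) *
            ω (k⁻¹ * g * k) l (l⁻¹ * k⁻¹ * g⁻¹ * h₁))) *
        (ω k (k⁻¹ * h₁) (h₁⁻¹ * h₀) * ω k (k⁻¹ * g * k) (k⁻¹ * g⁻¹ * h₁) /
          (ω k (k⁻¹ * g⁻¹ * h₁) (h₁⁻¹ * g * h₀) * ω g k (k⁻¹ * g⁻¹ * h₁))) *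
        (ω (k * l) (l⁻¹ * k⁻¹ * h₁) (h₁⁻¹ * h₀) *
            ω (k * l) (l⁻¹ * k⁻¹ * g * k * l) (l⁻¹ * k⁻¹ * g⁻¹ * h₁) /
          (ω (k * l) (l⁻¹ * k⁻¹ * g⁻¹ * h₁) (h₁⁻¹ * g * h₀) *
            ω g (k * l) (l⁻¹ * k⁻¹ * g⁻¹ * h₁)))⁻¹ =
      ω k (k⁻¹ * g * k) l / (ω g k l * ω k l (l⁻¹ * k⁻¹ * g * k * l)) :=
  crossing_phase_identity_general ω hω
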